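/- For p ∈ (1,3) \ {2}, there is no constant c such that |J_p(w,z)| ≤ c G_p(w,z) for all w,z ∈ R²; specifically, with w_k = (1, 1/k) and z_k = (1, 2/k), the ratio |J_p(w_k,z_k)| / G_p(w_k,z_k) tends to infinity as k → ∞. -/
import Mathlib


noncomputable def norm2 (z : ℝ × ℝ) : ℝ := Real.sqrt (z.1 ^ 2 + z.2 ^ 2)

noncomputable def sgnPow (κ a : ℝ) : ℝ := |a| ^ κ * Real.sign a

noncomputable def coBregmanJ (p : ℝ) (w z : ℝ × ℝ) : ℝ :=
  z.1 * sgnPow (p - 1) z.2 - w.1 * sgnPow (p - 1) w.2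
    - sgnPow (p - 1) w.2 * (z.1 - w.1)
    - (p - 1) * w.1 * |w.2| ^ (p - 2) * (z.2 - w.2)

noncomputable def bregmanG2 (p : ℝ) (w z : ℝ × ℝ) : ℝ :=
  norm2 (z - w) ^ 2 * (max (norm2 w) (norm2 z)) ^ (p - 2)

open Real Filter

lemma two_rpow_ne_self {p : ℝ} (hp1 : 1 < p) (hp3 : p < 3) (hp2 : p ≠ 2) :
    (2:ℝ) ^ (p - 1) ≠ p := by
  rcases lt_or_gt_of_ne hp2 with h | h
  · have := rpow_one_add_lt_one_add_mul_self (s := 1) (by norm_num) one_ne_zero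
      (p := p - 1) (by linarith) (by linarith)
    norm_num at this
    intro hh; rw [hh] at this; linarith
  · have := one_add_mul_self_lt_rpow_one_add (s := 1) (by norm_num) one_ne_zero
      (p := p - 1) (by linarith)
    norm_num at this
    intro hh; rw [hh] at this; linarith

lemma sgnPow_of_pos {κ a : ℝ} (ha : 0 < a) : sgnPow κ a = a ^ κ := by
  rw [sgnPow, Real.sign_of_pos ha, abs_of_pos ha, mul_one]

lemma Jval {p : ℝ} {K : ℝ} (hK : 0 < K) :
    coBregmanJ p (1, 1 / K) (1, 2 / K)
      = ((2:ℝ) ^ (p - 1) - p) * (1 / K) ^ (p - 1) := by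
  have h1 : (0:ℝ) < 1 / K := by positivity
  have h2 : (0:ℝ) < 2 / K := by positivity
  rw [coBregmanJ]
  simp only [sgnPow_of_pos h1, sgnPow_of_pos h2]
  have e1 : (2 / K : ℝ) ^ (p - 1) = 2 ^ (p - 1) * (1 / K) ^ (p - 1) := by
    rw [← Real.mul_rpow (by norm_num) (le_of_lt h1)]
    ring_nf
  have e2 : (1 / K : ℝ) ^ (p - 2) * (1 / K) = (1 / K) ^ (p - 1) := by
    rw [show p - 1 = (p - 2) + 1 by ring, Real.rpow_add h1, Real.rpow_one]
  have e3 : (2 / K - 1 / K : ℝ) = 1 / K := by ring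
  rw [e1, e3, abs_of_pos h1]
  calc 1 * (2 ^ (p - 1) * (1 / K) ^ (p - 1)) - 1 * (1 / K) ^ (p - 1)
        - (1 / K) ^ (p - 1) * (1 - 1)
        - (p - 1) * 1 * (1 / K) ^ (p - 2) * (1 / K)
      = 2 ^ (p - 1) * (1 / K) ^ (p - 1) - (1 / K) ^ (p - 1)
        - (p - 1) * ((1 / K) ^ (p - 2) * (1 / K)) := by ring
    _ = ((2:ℝ) ^ (p - 1) - p) * (1 / K) ^ (p - 1) := by rw [e2]; ring

lemma Gval {p : ℝ} {K : ℝ} (hK : 0 < K) :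
    bregmanG2 p (1, 1 / K) (1, 2 / K)
      = (1 / K) ^ 2 * Real.sqrt (1 + (2 / K) ^ 2) ^ (p - 2) := by
  have h1 : (0:ℝ) < 1 / K := by positivity
  rw [bregmanG2]
  have hzw : ((1, 2 / K) - (1, 1 / K) : ℝ × ℝ) = (0, 1 / K) := by
    rw [Prod.mk_sub_mk]
    norm_num
    ring
  rw [hzw]
  have hn : norm2 (0, 1 / K) = 1 / K := by
    rw [norm2, show ((0:ℝ), 1 / K).1 ^ 2 + ((0:ℝ), 1 / K).2 ^ 2 = (1 / K) ^ 2 by ring,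
      Real.sqrt_sq (le_of_lt h1)]
  have hmax : max (norm2 (1, 1 / K)) (norm2 (1, 2 / K)) = Real.sqrt (1 + (2 / K) ^ 2) := by
    rw [norm2, norm2]
    simp only
    rw [max_eq_right]
    · norm_num
    · apply Real.sqrt_le_sqrt
      have e : (2 / K : ℝ) ^ 2 = 4 * (1 / K) ^ 2 := by ring
      nlinarith [sq_nonneg (1 / K)]
  rw [hn, hmax]

theorem coBregmanJ_not_dominated (p : ℝ) (hp1 : 1 < p) (hp3 : p < 3) (hp2 : p ≠ 2) :
    Filter.Tendsto
      (fun k : ℕ =>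
        |coBregmanJ p (1, 1 / (k : ℝ)) (1, 2 / (k : ℝ))| /
          bregmanG2 p (1, 1 / (k : ℝ)) (1, 2 / (k : ℝ)))
      Filter.atTop Filter.atTop ∧
    ¬∃ c : ℝ, ∀ w z : ℝ × ℝ, |coBregmanJ p w z| ≤ c * bregmanG2 p w z := by
  set C : ℝ := (2:ℝ) ^ (p - 1) - p with hC
  have hCne : C ≠ 0 := sub_ne_zero.mpr (two_rpow_ne_self hp1 hp3 hp2)
  have hCpos : 0 < |C| := abs_pos.mpr hCne
  set m : ℝ := min 1 (Real.sqrt 5 ^ (2 - p)) with hm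
  have hmpos : 0 < m := lt_min one_pos (Real.rpow_pos_of_pos (by positivity) _)
  have key : ∀ k : ℕ, 1 ≤ k →
      |C| * m * (k : ℝ) ^ (3 - p) ≤
        |coBregmanJ p (1, 1 / (k : ℝ)) (1, 2 / (k : ℝ))| /
          bregmanG2 p (1, 1 / (k : ℝ)) (1, 2 / (k : ℝ)) := by
    intro k hk
    have hK1 : (1:ℝ) ≤ (k : ℝ) := by exact_mod_cast hk
    have hK : (0:ℝ) < (k : ℝ) := by linarith
    set K : ℝ := (k : ℝ)
    set s : ℝ := Real.sqrt (1 + (2 / K) ^ 2) with hs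
    have hs1 : 1 ≤ s := by
      have h := Real.sqrt_le_sqrt (show (1:ℝ) ≤ 1 + (2 / K) ^ 2 by nlinarith [sq_nonneg (2 / K)])
      rw [hs]
      simpa only [Real.sqrt_one] using h
    have hs5 : s ≤ Real.sqrt 5 := by
      apply Real.sqrt_le_sqrt
      have h2 : (2 / K : ℝ) ≤ 2 := by
        rw [div_le_iff₀ hK]; nlinarith
      have h0 : (0:ℝ) < 2 / K := by positivity
      nlinarith
    have hspos : 0 < s := lt_of_lt_of_le one_pos hs1
    have hsm : m ≤ s ^ (2 - p) := by
      rcases le_or_gt 0 (2 - p) with h | h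
      · calc m ≤ 1 := min_le_left _ _
          _ = (1:ℝ) ^ (2 - p) := (Real.one_rpow _).symm
          _ ≤ s ^ (2 - p) := Real.rpow_le_rpow (by norm_num) hs1 h
      · calc m ≤ Real.sqrt 5 ^ (2 - p) := min_le_right _ _
          _ ≤ s ^ (2 - p) := Real.rpow_le_rpow_of_nonpos hspos hs5 (le_of_lt h)
    rw [Jval hK, Gval hK, ← hs]
    have hpow : (0:ℝ) < (1 / K) ^ (p - 1) := Real.rpow_pos_of_pos (by positivity) _
    have hsp2 : (0:ℝ) < s ^ (p - 2) := Real.rpow_pos_of_pos hspos _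
    have hG : (0:ℝ) < (1 / K) ^ 2 * s ^ (p - 2) := by positivity
    rw [abs_mul, abs_of_pos hpow, le_div_iff₀ hG]
    have eA : (1 / K : ℝ) ^ (p - 1) = (K ^ (p - 1))⁻¹ := by
      rw [one_div, Real.inv_rpow (le_of_lt hK)]
    have eB : (1 / K : ℝ) ^ 2 = (K ^ (2:ℕ))⁻¹ := by
      rw [one_div, inv_pow]
    have eK : K ^ (3 - p) * (K ^ (2:ℕ))⁻¹ = (K ^ (p - 1))⁻¹ := by
      rw [← Real.rpow_natCast K 2, ← Real.rpow_neg (le_of_lt hK),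
        ← Real.rpow_add hK, ← Real.rpow_neg (le_of_lt hK)]
      congr 1
      push_cast
      ring
    have es : m * s ^ (p - 2) ≤ 1 := by
      calc m * s ^ (p - 2) ≤ s ^ (2 - p) * s ^ (p - 2) :=
            mul_le_mul_of_nonneg_right hsm (le_of_lt hsp2)
        _ = 1 := by
            rw [← Real.rpow_add hspos]
            norm_num
    calc |C| * m * K ^ (3 - p) * ((1 / K) ^ 2 * s ^ (p - 2))
        = |C| * (K ^ (3 - p) * (K ^ (2:ℕ))⁻¹) * (m * s ^ (p - 2)) := by
          rw [eB]; ring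
      _ = |C| * (K ^ (p - 1))⁻¹ * (m * s ^ (p - 2)) := by rw [eK]
      _ ≤ |C| * (K ^ (p - 1))⁻¹ * 1 := by
          apply mul_le_mul_of_nonneg_left es
          positivity
      _ = |C| * (1 / K) ^ (p - 1) := by rw [eA]; ring
  have hmain : Filter.Tendsto
      (fun k : ℕ =>
        |coBregmanJ p (1, 1 / (k : ℝ)) (1, 2 / (k : ℝ))| /
          bregmanG2 p (1, 1 / (k : ℝ)) (1, 2 / (k : ℝ)))
      Filter.atTop Filter.atTop := by
    apply tendsto_atTop_mono' atTop
      (Filter.eventually_atTop.mpr ⟨1, fun k hk => key k hk⟩)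
    have h1 : Tendsto (fun k : ℕ => ((k : ℝ)) ^ (3 - p)) atTop atTop :=
      (tendsto_rpow_atTop (by linarith)).comp tendsto_natCast_atTop_atTop
    exact h1.const_mul_atTop (by positivity)
  refine ⟨hmain, ?_⟩
  rintro ⟨c, hc⟩
  obtain ⟨k, hk1, hk2⟩ :=
    ((hmain.eventually (eventually_gt_atTop c)).and (eventually_ge_atTop 1)).exists
  have hK : (0:ℝ) < (k : ℝ) := by exact_mod_cast Nat.lt_of_lt_of_le Nat.zero_lt_one hk2
  have hGpos : 0 < bregmanG2 p (1, 1 / (k : ℝ)) (1, 2 / (k : ℝ)) := by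
    rw [Gval hK]
    have h1 : (0:ℝ) < 1 / (k:ℝ) := by positivity
    have hsq : (0:ℝ) < Real.sqrt (1 + (2 / (k:ℝ)) ^ 2) := Real.sqrt_pos.mpr (by positivity)
    positivity
  have := (div_le_iff₀ hGpos).mpr (hc (1, 1 / (k : ℝ)) (1, 2 / (k : ℝ)))
  linarith
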